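/- arXiv:1510.02808 — 2 statements merged into one kernel-verified Lean document; each statement's English description precedes it below -/
import Mathlib

section
/- Let {π_θ}_{θ∈Θ} be a jointly measurable family of portfolio maps indexed by a topological space Θ, let {μ(t)} ⊂ Δ_n satisfy Assumption (M), let ν_0 be a Borel probability measure on Θ and let {ν_t} be the wealth distributions. Define Cover's portfolio π̂(t) = ∫_Θ π_θ(μ(t)) dν_t(θ) ∈ Δ̄_n. Then the relative value V_{π̂}(t) of the strategy {π̂(t)} equals V̂(t) = ∫_Θ V_θ(t) dν_0(θ) for all t ≥ 0. -/
open MeasureTheory Filter Topology Finset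
open scoped ENNReal

noncomputable section

/-- The open unit simplex in `ℝⁿ`. -/
def oS (n : ℕ) : Set (Fin n → ℝ) := {p | (∀ i, 0 < p i) ∧ ∑ i, p i = 1}

/-- The closed unit simplex in `ℝⁿ`. -/
def cS (n : ℕ) : Set (Fin n → ℝ) := {p | (∀ i, 0 ≤ p i) ∧ ∑ i, p i = 1}

/-- Relative value of a (time-dependent) weight sequence `w` along market path `μ`. -/
def relV {n : ℕ} (μ w : ℕ → Fin n → ℝ) : ℕ → ℝ
  | 0 => 1
  | t + 1 => relV μ w t * ∑ i, w t i * (μ (t + 1) i / μ t i)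

/-- Relative value of a portfolio map. -/
def pV {n : ℕ} (μ : ℕ → ↥(oS n)) (π : ↥(oS n) → ↥(cS n)) : ℕ → ℝ :=
  relV (fun t => (μ t : Fin n → ℝ)) (fun t => (π (μ t) : Fin n → ℝ))

/-- Assumption (M): relative returns bounded between `1/M` and `M`. -/
def AssumptionM {n : ℕ} (M : ℝ) (μ : ℕ → ↥(oS n)) : Prop :=
  ∀ t i, 1 / M ≤ (μ (t + 1) : Fin n → ℝ) i / (μ t : Fin n → ℝ) i ∧
    (μ (t + 1) : Fin n → ℝ) i / (μ t : Fin n → ℝ) i ≤ M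

/-- Normalized wealth distribution `ν_t(B) = (∫_B V dν₀)/(∫ V dν₀)`. -/
def wd {T : Type*} [MeasurableSpace T] (ν0 : Measure T) (V : T → ℝ) : Measure T :=
  (ν0.withDensity (fun x => ENNReal.ofReal (V x)) Set.univ)⁻¹ •
    ν0.withDensity fun x => ENNReal.ofReal (V x)

/-! Cover's portfolio at time `t` is the `ν_t`-average of the vectors `π_θ(μ(t))`, so its one-step
return is the `ν_t`-average of the one-step returns of the `π_θ`, which by the definition of `ν_t`
is `V̂(t + 1) / V̂(t)`; the values then telescope. No integrability issue arises: at a fixed time,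
the one-step return of any portfolio lies between `0` and `∑ᵢ μᵢ(t+1)/μᵢ(t)`, so `θ ↦ V_θ(t)` is
bounded and positive. -/

lemma le_one_of_mem_cS {n : ℕ} {w : Fin n → ℝ} (hw : w ∈ cS n) (i : Fin n) : w i ≤ 1 :=
  hw.2 ▸ Finset.single_le_sum (fun j _ => hw.1 j) (Finset.mem_univ i)

lemma sum_mul_pos_of_mem_cS {n : ℕ} {w r : Fin n → ℝ} (hw : w ∈ cS n) (hr : ∀ i, 0 < r i) :
    0 < ∑ i, w i * r i := by
  obtain ⟨j, -, hj⟩ := Finset.exists_lt_of_sum_lt (s := Finset.univ)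
    (f := fun _ => (0 : ℝ)) (g := w) (by simp [hw.2])
  exact Finset.sum_pos' (fun i _ => mul_nonneg (hw.1 i) (hr i).le)
    ⟨j, Finset.mem_univ j, mul_pos hj (hr j)⟩

lemma sum_mul_le_sum_of_mem_cS {n : ℕ} {w r : Fin n → ℝ} (hw : w ∈ cS n) (hr : ∀ i, 0 ≤ r i) :
    ∑ i, w i * r i ≤ ∑ i, r i :=
  Finset.sum_le_sum fun i _ => mul_le_of_le_one_left (hr i) (le_one_of_mem_cS hw i)

lemma norm_le_one_of_mem_cS {n : ℕ} {w : Fin n → ℝ} (hw : w ∈ cS n) : ‖w‖ ≤ 1 :=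
  pi_norm_le_iff_of_nonneg zero_le_one |>.2 fun i => by
    rw [Real.norm_of_nonneg (hw.1 i)]; exact le_one_of_mem_cS hw i

lemma convex_cS (n : ℕ) : Convex ℝ (cS n) := convex_stdSimplex ℝ (Fin n)

lemma isClosed_cS (n : ℕ) : IsClosed (cS n) := isClosed_stdSimplex ℝ (Fin n)

section relV

variable {n : ℕ} {μ w : ℕ → Fin n → ℝ}

lemma relV_succ (t : ℕ) :
    relV μ w (t + 1) = relV μ w t * ∑ i, w t i * (μ (t + 1) i / μ t i) := rfl

lemma relV_pos (hμ : ∀ t i, 0 < μ t i) (hw : ∀ t, w t ∈ cS n) (t : ℕ) : 0 < relV μ w t := by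
  induction t with
  | zero => exact one_pos
  | succ t ih =>
    exact mul_pos ih (sum_mul_pos_of_mem_cS (hw t) fun i => div_pos (hμ _ i) (hμ t i))

lemma relV_le_prod (hμ : ∀ t i, 0 < μ t i) (hw : ∀ t, w t ∈ cS n) (t : ℕ) :
    relV μ w t ≤ ∏ s ∈ Finset.range t, ∑ i, μ (s + 1) i / μ s i := by
  induction t with
  | zero => exact le_rfl
  | succ t ih =>
    rw [relV_succ, Finset.prod_range_succ]
    exact mul_le_mul ih (sum_mul_le_sum_of_mem_cS (hw t) fun i => (div_pos (hμ _ i) (hμ t i)).le)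
      (sum_mul_pos_of_mem_cS (hw t) fun i => div_pos (hμ _ i) (hμ t i)).le
      ((relV_pos hμ hw t).le.trans ih)

lemma measurable_relV {Θ : Type*} [MeasurableSpace Θ] {w : Θ → ℕ → Fin n → ℝ}
    (hw : ∀ t, Measurable fun θ => w θ t) (t : ℕ) : Measurable fun θ => relV μ (w θ) t := by
  induction t with
  | zero => exact measurable_const
  | succ t ih =>
    simp only [relV_succ]
    exact ih.mul <| Finset.measurable_sum _ fun i _ =>
      ((measurable_pi_apply i).comp (hw t)).mul_const _

end relV

section wd

variable {T : Type*} [MeasurableSpace T] {ν0 : Measure T} {V : T → ℝ}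

lemma withDensity_ofReal_univ (hV : Integrable V ν0) (hV0 : 0 ≤ᵐ[ν0] V) :
    ν0.withDensity (fun x => ENNReal.ofReal (V x)) Set.univ = ENNReal.ofReal (∫ x, V x ∂ν0) := by
  rw [withDensity_apply _ MeasurableSet.univ, Measure.restrict_univ,
    ofReal_integral_eq_lintegral_ofReal hV hV0]

lemma isProbabilityMeasure_wd (hV : Integrable V ν0) (hV0 : 0 ≤ᵐ[ν0] V)
    (hpos : 0 < ∫ x, V x ∂ν0) : IsProbabilityMeasure (wd ν0 V) := by
  have hmass := withDensity_ofReal_univ hV hV0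
  have : IsFiniteMeasure (ν0.withDensity fun x => ENNReal.ofReal (V x)) :=
    isFiniteMeasure_withDensity_ofReal hV.2
  have : NeZero (ν0.withDensity fun x => ENNReal.ofReal (V x)) :=
    ⟨fun h => by simp [h] at hmass; linarith⟩
  exact isProbabilityMeasureSMul

lemma integral_wd {E : Type*} [NormedAddCommGroup E] [NormedSpace ℝ E]
    (hV : Integrable V ν0) (hV0 : 0 ≤ᵐ[ν0] V) (g : T → E) :
    ∫ x, g x ∂(wd ν0 V) = (∫ x, V x ∂ν0)⁻¹ • ∫ x, V x • g x ∂ν0 := by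
  have hVm : AEMeasurable (fun x => (V x).toNNReal) ν0 :=
    hV.aemeasurable.real_toNNReal
  rw [wd, withDensity_ofReal_univ hV hV0, integral_smul_measure, ENNReal.toReal_inv,
    ENNReal.toReal_ofReal (integral_nonneg_of_ae hV0)]
  congr 1
  change ∫ x, g x ∂ν0.withDensity (fun x => ((V x).toNNReal : ℝ≥0∞)) = _
  rw [integral_withDensity_eq_integral_smul₀ hVm]
  refine integral_congr_ae (hV0.mono fun x hx => ?_)
  simp only [NNReal.smul_def, Real.coe_toNNReal _ hx]

end wd

lemma sum_integral_apply_mul {α : Type*} [MeasurableSpace α] {ν : Measure α} {n : ℕ}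
    {f : α → Fin n → ℝ} (hf : Integrable f ν) (r : Fin n → ℝ) :
    ∑ i, (∫ x, f x ∂ν) i * r i = ∫ x, ∑ i, f x i * r i ∂ν := by
  rw [integral_finsetSum _ fun i _ => (hf.eval i).mul_const _]
  exact Finset.sum_congr rfl fun i _ => by rw [eval_integral hf.eval, integral_mul_const]

section cover

variable {n : ℕ} {Θ : Type*} [MeasurableSpace Θ] {π : Θ → ↥(oS n) → ↥(cS n)}
  (μ : ℕ → ↥(oS n)) (ν0 : Measure Θ)

def coverPortfolio (π : Θ → ↥(oS n) → ↥(cS n)) (t : ℕ) : Fin n → ℝ :=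
  ∫ θ, (π θ (μ t) : Fin n → ℝ) ∂(wd ν0 fun θ => pV μ (π θ) t)

lemma pV_succ (p : ↥(oS n) → ↥(cS n)) (t : ℕ) :
    pV μ p (t + 1) = pV μ p t *
      ∑ i, (p (μ t) : Fin n → ℝ) i * ((μ (t + 1) : Fin n → ℝ) i / (μ t : Fin n → ℝ) i) :=
  rfl

lemma pV_pos (p : ↥(oS n) → ↥(cS n)) (t : ℕ) : 0 < pV μ p t :=
  relV_pos (fun t => (μ t).2.1) (fun t => (p (μ t)).2) t

lemma pV_le_prod (p : ↥(oS n) → ↥(cS n)) (t : ℕ) :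
    pV μ p t ≤ ∏ s ∈ Finset.range t,
      ∑ i, (μ (s + 1) : Fin n → ℝ) i / (μ s : Fin n → ℝ) i :=
  relV_le_prod (fun t => (μ t).2.1) (fun t => (p (μ t)).2) t

variable (hπ : ∀ p, Measurable fun θ => (π θ p : Fin n → ℝ))
include hπ

lemma measurable_pV (t : ℕ) : Measurable fun θ => pV μ (π θ) t :=
  measurable_relV (fun t => hπ (μ t)) t

lemma integrable_pV [IsFiniteMeasure ν0] (t : ℕ) : Integrable (fun θ => pV μ (π θ) t) ν0 :=
  .of_bound (measurable_pV μ hπ t).aestronglyMeasurable _ <| ae_of_all _ fun θ => by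
    rw [Real.norm_of_nonneg (pV_pos μ _ t).le]
    exact pV_le_prod μ _ t

lemma integral_pV_pos [IsFiniteMeasure ν0] [NeZero ν0] (t : ℕ) :
    0 < ∫ θ, pV μ (π θ) t ∂ν0 := by
  rw [integral_pos_iff_support_of_nonneg (fun θ => (pV_pos μ _ t).le) (integrable_pV μ ν0 hπ t)]
  simp [Function.support, (pV_pos μ _ t).ne', NeZero.ne ν0]

lemma integrable_portfolio (ν : Measure Θ) [IsFiniteMeasure ν] (p : ↥(oS n)) :
    Integrable (fun θ => (π θ p : Fin n → ℝ)) ν :=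
  .of_bound (hπ p).aestronglyMeasurable 1 <| ae_of_all _ fun θ => norm_le_one_of_mem_cS (π θ p).2

section finite

variable [IsFiniteMeasure ν0] [NeZero ν0]

lemma isProbabilityMeasure_wd_pV (t : ℕ) :
    IsProbabilityMeasure (wd ν0 fun θ => pV μ (π θ) t) :=
  isProbabilityMeasure_wd (integrable_pV μ ν0 hπ t) (ae_of_all _ fun _ => (pV_pos μ _ t).le)
    (integral_pV_pos μ ν0 hπ t)

lemma coverPortfolio_mem_cS (t : ℕ) : coverPortfolio μ ν0 π t ∈ cS n :=
  have := isProbabilityMeasure_wd_pV μ ν0 hπ t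
  (convex_cS n).integral_mem (isClosed_cS n) (ae_of_all _ fun θ => (π θ (μ t)).2)
    (integrable_portfolio hπ _ (μ t))

lemma sum_coverPortfolio_mul (t : ℕ) :
    ∑ i, coverPortfolio μ ν0 π t i * ((μ (t + 1) : Fin n → ℝ) i / (μ t : Fin n → ℝ) i) =
      (∫ θ, pV μ (π θ) t ∂ν0)⁻¹ * ∫ θ, pV μ (π θ) (t + 1) ∂ν0 := by
  have := isProbabilityMeasure_wd_pV μ ν0 hπ t
  rw [coverPortfolio, sum_integral_apply_mul (integrable_portfolio hπ _ (μ t)),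
    integral_wd (integrable_pV μ ν0 hπ t) (ae_of_all _ fun _ => (pV_pos μ _ t).le)]
  simp only [pV_succ, smul_eq_mul]

end finite

lemma relV_coverPortfolio [IsProbabilityMeasure ν0] (t : ℕ) :
    relV (fun s => (μ s : Fin n → ℝ)) (coverPortfolio μ ν0 π) t = ∫ θ, pV μ (π θ) t ∂ν0 := by
  induction t with
  | zero => simp [relV, pV]
  | succ t ih =>
    rw [relV_succ, ih, sum_coverPortfolio_mul μ ν0 hπ,
      mul_inv_cancel_left₀ (integral_pV_pos μ ν0 hπ t).ne']

end cover

theorem stmt4_general {n : ℕ}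
    {Θ : Type*} [MeasurableSpace Θ]
    (π : Θ → ↥(oS n) → ↥(cS n))
    (hmeas : Measurable fun pc : ↥(oS n) × Θ => π pc.2 pc.1)
    (μ : ℕ → ↥(oS n))
    (ν0 : Measure Θ) [IsProbabilityMeasure ν0] :
    ∀ t : ℕ,
      (∫ θ : Θ, (π θ (μ t) : Fin n → ℝ) ∂(wd ν0 fun θ => pV μ (π θ) t)) ∈ cS n ∧
      relV (fun s => (μ s : Fin n → ℝ))
          (fun s => ∫ θ : Θ, (π θ (μ s) : Fin n → ℝ) ∂(wd ν0 fun θ => pV μ (π θ) s)) t =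
        ∫ θ : Θ, pV μ (π θ) t ∂ν0 := by
  have hπ : ∀ p, Measurable fun θ => (π θ p : Fin n → ℝ) := fun p =>
    measurable_subtype_coe.comp (hmeas.comp (measurable_const.prodMk measurable_id))
  exact fun t => ⟨coverPortfolio_mem_cS μ ν0 hπ t, relV_coverPortfolio μ ν0 hπ t⟩

/-- Lemma 2.4, Cover's portfolio: the relative value of the wealth-weighted
average strategy `π̂(t) = ∫_Θ π_θ(μ(t)) dν_t(θ)` equals `V̂(t) = ∫_Θ V_θ(t) dν₀(θ)`, and
`π̂(t) ∈ Δ̄ₙ`. -/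
theorem stmt4 {n : ℕ} (hn : 2 ≤ n) (M : ℝ) (hM : 0 < M)
    {Θ : Type*} [TopologicalSpace Θ] [MeasurableSpace Θ] [BorelSpace Θ]
    (π : Θ → ↥(oS n) → ↥(cS n))
    (hmeas : Measurable fun pc : ↥(oS n) × Θ => π pc.2 pc.1)
    (μ : ℕ → ↥(oS n)) (hAM : AssumptionM M μ)
    (ν0 : Measure Θ) [IsProbabilityMeasure ν0] :
    ∀ t : ℕ,
      (∫ θ : Θ, (π θ (μ t) : Fin n → ℝ) ∂(wd ν0 fun θ => pV μ (π θ) t)) ∈ cS n ∧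
      relV (fun s => (μ s : Fin n → ℝ))
          (fun s => ∫ θ : Θ, (π θ (μ s) : Fin n → ℝ) ∂(wd ν0 fun θ => pV μ (π θ) s)) t =
        ∫ θ : Θ, pV μ (π θ) t ∂ν0 :=
  stmt4_general π hmeas μ ν0
end
end

section
/- Suppose the market weight sequence {μ(t)} satisfies Assumption (M) and takes values in a finite set E ⊂ Δ_n. Let Θ = (Δ̄_n)^E, with the topology of pointwise convergence, and suppose the initial distribution ν_0 on Θ has full support. Then Cover's portfolio π̂(t) = ∫_Θ π(μ(t)) dν_t(π) is universal: lim_{t→∞} (1/t) log ( V̂(t)/V*(t) ) = 0, where V̂(t) is the relative value of π̂ and V*(t) = sup_{π ∈ Θ} V_π(t). -/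
open scoped Classical

open MeasureTheory Filter Topology Finset
open scoped ENNReal

noncomputable section

/-- Relative value of a portfolio map defined on a finite state space `E`. -/
def pVE {n : ℕ} {E : Finset (Fin n → ℝ)} (μ : ℕ → ↥(oS n))
    (hr : ∀ t, (μ t : Fin n → ℝ) ∈ E) (π : ↥E → ↥(cS n)) : ℕ → ℝ :=
  relV (fun t => (μ t : Fin n → ℝ))
    (fun t => (π ⟨(μ t : Fin n → ℝ), hr t⟩ : Fin n → ℝ))

/-- `ℓ_π(p,q) = log( Σ_i π_i(p) q_i/p_i )` for a portfolio map on `E`. -/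
def lE {n : ℕ} {E : Finset (Fin n → ℝ)} (π : ↥E → ↥(cS n)) (p q : ↥E) : ℝ :=
  Real.log (∑ i, (π p : Fin n → ℝ) i * ((q : Fin n → ℝ) i / (p : Fin n → ℝ) i))

/-!
A wealth `V_π(t)` is a product of `t` one-period factors `∑ i, π_i r_i` with returns
`r_i ∈ [1/M, M]`; such a factor is at least `1/M` and moves by at most `n M δ` when the
weights move by `δ`, so `log V_π(t)` is `n M² t`-Lipschitz in `π` for the sup metric on `Θ`.
Let `π*` maximise `V_π(t)` over the compact `Θ`. On the `r`-ball around `π*` we get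
`V_π(t) ≥ exp (-n M² r t) V*(t)`, and by compactness and full support all `r`-balls have
`ν₀`-mass at least some `κ > 0`. Hence `κ exp (-n M² r t) ≤ V̂(t) / V*(t) ≤ 1`, and `r` is
arbitrary.
-/

open Metric

theorem tendsto_div_natCast_atTop_zero_of_bounds {g : ℕ → ℝ} (hle : ∀ t, g t ≤ 0)
    (hge : ∀ ε > 0, ∃ C, ∀ t, C - ε * t ≤ g t) :
    Tendsto (fun t : ℕ => g t / t) atTop (𝓝 0) := by
  refine tendsto_order.2 ⟨fun a ha => ?_, fun a ha => Eventually.of_forall fun t =>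
    (div_nonpos_of_nonpos_of_nonneg (hle t) t.cast_nonneg).trans_lt ha⟩
  obtain ⟨C, hC⟩ := hge (-a / 2) (by linarith)
  have hCt := (tendsto_const_div_atTop_nhds_zero_nat C).eventually
    (lt_mem_nhds (by linarith : a / 2 < 0))
  filter_upwards [hCt, eventually_ge_atTop 1] with t hCt ht
  have htpos : (0 : ℝ) < t := by exact_mod_cast ht
  calc a < C / t - -a / 2 := by linarith
    _ = (C - -a / 2 * t) / t := by field_simp
    _ ≤ g t / t := by gcongr; exact hC t

theorem exists_pos_forall_le_measureReal_ball {X : Type*} [PseudoMetricSpace X] [CompactSpace X]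
    [MeasurableSpace X] (ν : Measure X) [IsFiniteMeasure ν] [ν.IsOpenPosMeasure]
    {r : ℝ} (hr : 0 < r) : ∃ κ > 0, ∀ x, κ ≤ ν.real (ball x r) := by
  obtain ⟨s, -, hs, hcover⟩ :=
    finite_cover_balls_of_compact (isCompact_univ (X := X)) (half_pos hr)
  have hsmall : ∀ᶠ κ in 𝓝[>] (0 : ℝ), ∀ c ∈ hs.toFinset, κ ≤ ν.real (ball c (r / 2)) := by
    refine (eventually_all_finset _).2 fun c _ => ?_
    have hpos : 0 < ν.real (ball c (r / 2)) :=
      ENNReal.toReal_pos (measure_ball_pos ν c (half_pos hr)).ne' (measure_ne_top ν _)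
    exact ((eventually_lt_nhds hpos).filter_mono nhdsWithin_le_nhds).mono fun κ h => h.le
  obtain ⟨κ, hκ, hκpos⟩ := (hsmall.and self_mem_nhdsWithin).exists
  refine ⟨κ, hκpos, fun x => ?_⟩
  obtain ⟨c, hc, hxc⟩ := Set.mem_iUnion₂.1 (hcover (Set.mem_univ x))
  have hsub : ball c (r / 2) ⊆ ball x r := fun y hy => by
    rw [mem_ball] at hy hxc ⊢
    linarith [dist_triangle y c x, dist_comm x c]
  exact (hκ c (hs.mem_toFinset.2 hc)).trans (measureReal_mono hsub)

section CompactProbability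

variable {Θ : Type*} [PseudoMetricSpace Θ] [CompactSpace Θ] [MeasurableSpace Θ]
  [OpensMeasurableSpace Θ] {ν : Measure Θ} [IsProbabilityMeasure ν] {f : Θ → ℝ}

theorem integral_le_iSup_of_continuous (hf : Continuous f) : ∫ x, f x ∂ν ≤ ⨆ x, f x := by
  have hint := hf.integrable_of_hasCompactSupport (μ := ν) (HasCompactSupport.of_compactSpace f)
  calc ∫ x, f x ∂ν ≤ ∫ _, (⨆ x, f x) ∂ν :=
        integral_mono hint (integrable_const _) (le_ciSup (isCompact_range hf).bddAbove)
    _ = ⨆ x, f x := by simp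

theorem measureReal_ball_mul_exp_mul_iSup_le_integral [Nonempty Θ] (hf : Continuous f)
    (hf0 : ∀ x, 0 ≤ f x) {L : ℝ} (hL : 0 ≤ L) (hlip : ∀ x y, f y ≤ Real.exp (L * dist x y) * f x)
    {κ r : ℝ} (hκ : ∀ x, κ ≤ ν.real (ball x r)) :
    κ * (Real.exp (-(L * r)) * ⨆ x, f x) ≤ ∫ x, f x ∂ν := by
  obtain ⟨xmax, -, hmax⟩ := isCompact_univ.exists_isMaxOn Set.univ_nonempty hf.continuousOn
  have hsup : ⨆ x, f x = f xmax :=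
    le_antisymm (ciSup_le fun x => hmax (Set.mem_univ x)) (le_ciSup (isCompact_range hf).bddAbove _)
  have hint := hf.integrable_of_hasCompactSupport (μ := ν) (HasCompactSupport.of_compactSpace f)
  have hball : ∀ y ∈ ball xmax r, Real.exp (-(L * r)) * f xmax ≤ f y := fun y hy => by
    rw [Real.exp_neg, inv_mul_le_iff₀ (Real.exp_pos _)]
    calc f xmax ≤ Real.exp (L * dist y xmax) * f y := hlip y xmax
      _ ≤ Real.exp (L * r) * f y := by gcongr; exacts [hf0 y, (mem_ball.1 hy).le]
  calc κ * (Real.exp (-(L * r)) * ⨆ x, f x)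
      ≤ Real.exp (-(L * r)) * f xmax * ν.real (ball xmax r) := by
        rw [hsup, mul_comm]
        exact mul_le_mul_of_nonneg_left (hκ xmax) (mul_nonneg (Real.exp_pos _).le (hf0 xmax))
    _ ≤ ∫ x in ball xmax r, f x ∂ν := setIntegral_ge_of_const_le_real measurableSet_ball
        (measure_ne_top ν _) hball hint.integrableOn
    _ ≤ ∫ x, f x ∂ν := setIntegral_le_integral hint (Eventually.of_forall hf0)

end CompactProbability

theorem tendsto_log_integral_div_iSup_div_atTop {Θ : Type*} [PseudoMetricSpace Θ] [CompactSpace Θ]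
    [Nonempty Θ] [MeasurableSpace Θ] [OpensMeasurableSpace Θ] (ν : Measure Θ)
    [IsProbabilityMeasure ν] [ν.IsOpenPosMeasure] {V : ℕ → Θ → ℝ} (hcont : ∀ t, Continuous (V t))
    (hpos : ∀ t x, 0 < V t x) {K : ℝ} (hK : 0 ≤ K)
    (hlip : ∀ t x y, V t y ≤ Real.exp (K * t * dist x y) * V t x) :
    Tendsto (fun t : ℕ => Real.log ((∫ x, V t x ∂ν) / ⨆ x, V t x) / t) atTop (𝓝 0) := by
  have hsup_pos : ∀ t, 0 < ⨆ x, V t x := fun t =>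
    (hpos t (Classical.arbitrary Θ)).trans_le (le_ciSup (isCompact_range (hcont t)).bddAbove _)
  refine tendsto_div_natCast_atTop_zero_of_bounds (fun t => ?_) fun ε hε => ?_
  · refine Real.log_nonpos (div_nonneg (integral_nonneg fun x => (hpos t x).le) (hsup_pos t).le) ?_
    exact (div_le_one (hsup_pos t)).2 (integral_le_iSup_of_continuous (hcont t))
  -- on an `r`-ball around a maximiser, `V t` stays within a factor `exp (-ε t)` of its maximum
  set r := ε / (K + 1)
  have hr : 0 < r := by positivity
  have hKr : K * r ≤ ε := by
    rw [mul_div_assoc', div_le_iff₀ (by positivity)]; nlinarith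
  obtain ⟨κ, hκ, hball⟩ := exists_pos_forall_le_measureReal_ball ν hr
  refine ⟨Real.log κ, fun t => ?_⟩
  have hlow := measureReal_ball_mul_exp_mul_iSup_le_integral (hcont t) (fun x => (hpos t x).le)
    (by positivity) (hlip t) hball
  calc Real.log κ - ε * t ≤ Real.log κ - K * t * r := by
        have : K * t * r ≤ ε * t := by nlinarith [t.cast_nonneg (α := ℝ)]
        linarith
    _ = Real.log (κ * Real.exp (-(K * t * r))) := by
        rw [Real.log_mul hκ.ne' (Real.exp_pos _).ne', Real.log_exp]; ring
    _ ≤ Real.log ((∫ x, V t x ∂ν) / ⨆ x, V t x) := by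
        refine Real.log_le_log (by positivity) ?_
        rw [le_div_iff₀ (hsup_pos t)]
        linarith

theorem relV_eq_prod {n : ℕ} (μ w : ℕ → Fin n → ℝ) (t : ℕ) :
    relV μ w t = ∏ s ∈ range t, ∑ i, w s i * (μ (s + 1) i / μ s i) := by
  induction t with
  | zero => rfl
  | succ t ih => rw [relV, ih, prod_range_succ]

theorem le_sum_mul_of_mem_stdSimplex {ι : Type*} [Fintype ι] {w r : ι → ℝ} {a : ℝ}
    (hw : w ∈ stdSimplex ℝ ι) (hr : ∀ i, a ≤ r i) : a ≤ ∑ i, w i * r i :=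
  calc a = ∑ i, w i * a := by rw [← sum_mul, hw.2, one_mul]
    _ ≤ ∑ i, w i * r i := sum_le_sum fun i _ => mul_le_mul_of_nonneg_left (hr i) (hw.1 i)

theorem sum_mul_le_exp_mul_sum {ι : Type*} [Fintype ι] {M δ : ℝ} (hM : 0 < M) (hδ : 0 ≤ δ)
    {w w' r : ι → ℝ} (hw : w ∈ stdSimplex ℝ ι) (hr : ∀ i, 1 / M ≤ r i ∧ r i ≤ M)
    (hww' : ∀ i, |w' i - w i| ≤ δ) :
    ∑ i, w' i * r i ≤ Real.exp (Fintype.card ι * M ^ 2 * δ) * ∑ i, w i * r i := by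
  set m := Fintype.card ι
  have hlow : 1 / M ≤ ∑ i, w i * r i := le_sum_mul_of_mem_stdSimplex hw fun i => (hr i).1
  have hdiff : ∑ i, w' i * r i - ∑ i, w i * r i ≤ m * δ * M := by
    rw [← sum_sub_distrib]
    calc ∑ i, (w' i * r i - w i * r i) ≤ ∑ _i : ι, δ * M := sum_le_sum fun i _ => by
          rw [← sub_mul]
          exact mul_le_mul ((le_abs_self _).trans (hww' i)) (hr i).2
            ((one_div_pos.2 hM).le.trans (hr i).1) hδ
      _ = m * δ * M := by rw [sum_const, card_univ, nsmul_eq_mul, mul_assoc]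
  have hrel : m * δ * M ≤ m * M ^ 2 * δ * ∑ i, w i * r i :=
    calc m * δ * M = m * M ^ 2 * δ * (1 / M) := by field_simp
      _ ≤ m * M ^ 2 * δ * ∑ i, w i * r i := mul_le_mul_of_nonneg_left hlow (by positivity)
  calc ∑ i, w' i * r i ≤ (m * M ^ 2 * δ + 1) * ∑ i, w i * r i := by linarith
    _ ≤ Real.exp (m * M ^ 2 * δ) * ∑ i, w i * r i := by
        gcongr
        · exact (one_div_pos.2 hM).le.trans hlow
        · exact Real.add_one_le_exp _

section Market

variable {n : ℕ} {M : ℝ} {E : Finset (Fin n → ℝ)} {μ : ℕ → ↥(oS n)}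
  (hr : ∀ t, (μ t : Fin n → ℝ) ∈ E)

theorem pVE_eq_prod (π : ↥E → ↥(cS n)) (t : ℕ) :
    pVE μ hr π t = ∏ s ∈ range t, ∑ i, (π ⟨μ s, hr s⟩ : Fin n → ℝ) i *
      ((μ (s + 1) : Fin n → ℝ) i / (μ s : Fin n → ℝ) i) :=
  relV_eq_prod _ _ t

theorem continuous_pVE (t : ℕ) : Continuous fun π : ↥E → ↥(cS n) => pVE μ hr π t := by
  simp_rw [pVE_eq_prod]
  refine continuous_finsetProd _ fun s _ => continuous_finsetSum _ fun i _ =>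
    Continuous.mul ?_ continuous_const
  exact (continuous_apply i).comp' (continuous_subtype_val.comp' (continuous_apply _))

theorem pVE_pos (hM : 0 < M) (hAM : AssumptionM M μ) (t : ℕ) (π : ↥E → ↥(cS n)) :
    0 < pVE μ hr π t := by
  rw [pVE_eq_prod]
  exact prod_pos fun s _ => (one_div_pos.2 hM).trans_le
    (le_sum_mul_of_mem_stdSimplex (π _).2 fun i => (hAM s i).1)

theorem pVE_le_exp_mul_pVE (hM : 0 < M) (hAM : AssumptionM M μ) (t : ℕ)
    (π π' : ↥E → ↥(cS n)) :
    pVE μ hr π' t ≤ Real.exp (n * M ^ 2 * t * dist π π') * pVE μ hr π t := by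
  have hexp : Real.exp (n * M ^ 2 * t * dist π π') =
      ∏ _s ∈ range t, Real.exp (n * M ^ 2 * dist π π') := by
    rw [prod_const, card_range, ← Real.exp_nat_mul]; ring_nf
  have hclose : ∀ p i, |(π' p : Fin n → ℝ) i - (π p : Fin n → ℝ) i| ≤ dist π π' := fun p i => by
    rw [← Real.dist_eq, dist_comm π]
    exact (dist_le_pi_dist _ _ i).trans
      ((Subtype.dist_eq _ _).symm.trans_le (dist_le_pi_dist _ _ p))
  rw [pVE_eq_prod, pVE_eq_prod, hexp, ← prod_mul_distrib]
  refine prod_le_prod (fun s _ => ?_) fun s _ => ?_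
  · exact (one_div_pos.2 hM).le.trans
      (le_sum_mul_of_mem_stdSimplex (π' _).2 fun i => (hAM s i).1)
  · simpa using sum_mul_le_exp_mul_sum hM dist_nonneg (π _).2 (hAM s) (hclose _)

end Market

theorem stmt7_general {n : ℕ} (M : ℝ) (hM : 0 < M)
    (E : Finset (Fin n → ℝ))
    (μ : ℕ → ↥(oS n)) (hAM : AssumptionM M μ) (hr : ∀ t, (μ t : Fin n → ℝ) ∈ E)
    (ν0 : Measure (↥E → ↥(cS n))) [IsProbabilityMeasure ν0]
    (hsupp : ∀ U : Set (↥E → ↥(cS n)), IsOpen U → U.Nonempty → 0 < ν0 U) :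
    Tendsto (fun t : ℕ =>
        Real.log ((∫ π : ↥E → ↥(cS n), pVE μ hr π t ∂ν0) /
          (⨆ π : ↥E → ↥(cS n), pVE μ hr π t)) / t)
      atTop (𝓝 0) := by
  have : CompactSpace ↥(cS n) := isCompact_iff_compactSpace.mp (isCompact_stdSimplex ℝ (Fin n))
  have : Nonempty (↥E → ↥(cS n)) := ⟨fun _ => ⟨μ 0, fun i => ((μ 0).2.1 i).le, (μ 0).2.2⟩⟩
  have : ν0.IsOpenPosMeasure := ⟨fun U hU hne => (hsupp U hU hne).ne'⟩
  exact tendsto_log_integral_div_iSup_div_atTop ν0 (continuous_pVE hr) (pVE_pos hr hM hAM)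
    (by positivity) (pVE_le_exp_mul_pVE hr hM hAM)

/-- Theorem 3.3(i): finite state space: Cover's portfolio is universal,
`(1/t) log (V̂(t)/V*(t)) → 0`, where `V̂(t) = ∫_Θ V_π(t) dν₀(π)` and
`V*(t) = sup_{π ∈ Θ} V_π(t)`, `Θ = (Δ̄ₙ)^E`. -/
theorem stmt7 {n : ℕ} (hn : 2 ≤ n) (M : ℝ) (hM : 0 < M)
    (E : Finset (Fin n → ℝ)) (hE : ∀ p ∈ E, p ∈ oS n)
    (μ : ℕ → ↥(oS n)) (hAM : AssumptionM M μ) (hr : ∀ t, (μ t : Fin n → ℝ) ∈ E)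
    (ν0 : Measure (↥E → ↥(cS n))) [IsProbabilityMeasure ν0]
    (hsupp : ∀ U : Set (↥E → ↥(cS n)), IsOpen U → U.Nonempty → 0 < ν0 U) :
    Tendsto (fun t : ℕ =>
        Real.log ((∫ π : ↥E → ↥(cS n), pVE μ hr π t ∂ν0) /
          (⨆ π : ↥E → ↥(cS n), pVE μ hr π t)) / t)
      atTop (𝓝 0) :=
  stmt7_general M hM E μ hAM hr ν0 hsupp
end
end
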